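/- Exactness of charge/discharge relaxation under degradation cost: in the one-period problem min over (P^c, P^d) ∈ [0, P̄]² of c·P^d − λ·(η_c P^c − P^d/η_d) subject to net injection η_c P^c − P^d/η_d = E fixed, if the degradation cost c > 0 and efficiencies satisfy η_c η_d < 1, then any optimal solution satisfies P^c · P^d = 0, i.e., simultaneous charging and discharging never occurs at optimum even without a complementarity constraint. -/

import Mathlib

/-!
The term `λ (η_c P^c − P^d / η_d)` is the constant `λ E` on the feasible set, so an optimum minimises
the discharge `P^d`. If both `P^c` and `P^d` were positive, giving up `ε` of charging together with
`η_c η_d ε` of discharging keeps the net injection and all bounds, and strictly lowers `P^d`.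
-/

section SameNetInjection

variable {ηc ηd : ℝ}

lemma net_injection_sub_charge_discharge (hηd : ηd ≠ 0) (Pc Pd ε : ℝ) :
    ηc * (Pc - ε) - (Pd - ηc * ηd * ε) / ηd = ηc * Pc - Pd / ηd := by
  field_simp
  ring

lemma exists_same_net_injection_lt_discharge (hηc : 0 < ηc) (hηd : 0 < ηd) {Pc Pd : ℝ}
    (hPc : 0 < Pc) (hPd : 0 < Pd) :
    ∃ Pc' Pd' : ℝ, 0 ≤ Pc' ∧ Pc' ≤ Pc ∧ 0 ≤ Pd' ∧ Pd' < Pd ∧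
      ηc * Pc' - Pd' / ηd = ηc * Pc - Pd / ηd := by
  have hη : 0 < ηc * ηd := mul_pos hηc hηd
  set ε := min Pc (Pd / (ηc * ηd))
  have hε : 0 < ε := lt_min hPc (div_pos hPd hη)
  have hεPd : ηc * ηd * ε ≤ Pd := (le_div_iff₀' hη).mp (min_le_right _ _)
  refine ⟨Pc - ε, Pd - ηc * ηd * ε, ?_, ?_, ?_, ?_,
    net_injection_sub_charge_discharge hηd.ne' Pc Pd ε⟩
  · linarith [min_le_left Pc (Pd / (ηc * ηd))]
  · linarith
  · linarith
  · linarith [mul_pos hη hε]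

end SameNetInjection

theorem storage_relaxation_exact_general
    (c lam ηc ηd Pbar E : ℝ)
    (hc : 0 < c) (hηc : 0 < ηc) (hηd : 0 < ηd)
    (Pc Pd : ℝ)
    (hfeas : 0 ≤ Pc ∧ Pc ≤ Pbar ∧ 0 ≤ Pd ∧ Pd ≤ Pbar ∧ ηc * Pc - Pd / ηd = E)
    (hopt : ∀ Pc' Pd' : ℝ,
      (0 ≤ Pc' ∧ Pc' ≤ Pbar ∧ 0 ≤ Pd' ∧ Pd' ≤ Pbar ∧ ηc * Pc' - Pd' / ηd = E) →
      c * Pd - lam * (ηc * Pc - Pd / ηd) ≤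
        c * Pd' - lam * (ηc * Pc' - Pd' / ηd)) :
    Pc * Pd = 0 := by
  obtain ⟨hPc0, hPcb, hPd0, hPdb, hnet⟩ := hfeas
  by_contra h
  obtain ⟨hPc, hPd⟩ := mul_ne_zero_iff.mp h
  obtain ⟨Pc', Pd', hPc'0, hPc'Pc, hPd'0, hPd'Pd, hnet'⟩ :=
    exists_same_net_injection_lt_discharge hηc hηd (hPc0.lt_of_ne' hPc) (hPd0.lt_of_ne' hPd)
  rw [hnet] at hnet'
  have hcost := hopt Pc' Pd' ⟨hPc'0, hPc'Pc.trans hPcb, hPd'0, hPd'Pd.le.trans hPdb, hnet'⟩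
  rw [hnet, hnet'] at hcost
  have : Pd ≤ Pd' := le_of_mul_le_mul_left (by linarith) hc
  exact this.not_gt hPd'Pd

/-- Exactness of the charge/discharge relaxation under a strictly positive
degradation cost: in the one-period problem, any optimal `(Pc, Pd)` with fixed
net injection `η_c Pc − Pd/η_d = E` satisfies `Pc · Pd = 0`. -/
theorem storage_relaxation_exact
    (c lam ηc ηd Pbar E : ℝ)
    (hc : 0 < c) (hηc : 0 < ηc) (hηc1 : ηc ≤ 1) (hηd : 0 < ηd) (hηd1 : ηd ≤ 1)
    (hrt : ηc * ηd < 1) (hlam : 0 ≤ lam) (hPbar : 0 ≤ Pbar)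
    (Pc Pd : ℝ)
    (hfeas : 0 ≤ Pc ∧ Pc ≤ Pbar ∧ 0 ≤ Pd ∧ Pd ≤ Pbar ∧ ηc * Pc - Pd / ηd = E)
    (hopt : ∀ Pc' Pd' : ℝ,
      (0 ≤ Pc' ∧ Pc' ≤ Pbar ∧ 0 ≤ Pd' ∧ Pd' ≤ Pbar ∧ ηc * Pc' - Pd' / ηd = E) →
      c * Pd - lam * (ηc * Pc - Pd / ηd) ≤
        c * Pd' - lam * (ηc * Pc' - Pd' / ηd)) :
    Pc * Pd = 0 :=
  storage_relaxation_exact_general c lam ηc ηd Pbar E hc hηc hηd Pc Pd hfeas hopt
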